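/- Let P₁, P₂, P₃ be three affinely independent points in the Euclidean plane ℝ² and let P₀ be a point distinct from P₁, P₂ and P₃. Then (P₀ − P₁)/‖P₀ − P₁‖ + (P₀ − P₂)/‖P₀ − P₂‖ + (P₀ − P₃)/‖P₀ − P₃‖ = 0 if and only if P₀ lies in the interior of the convex hull of {P₁, P₂, P₃} and ∠P₁P₀P₂ = ∠P₂P₀P₃ = ∠P₃P₀P₁ = 2π/3. -/

import Mathlib

open Real EuclideanGeometry
open scoped RealInnerProductSpace

/-!
Since `‖u + v + w‖² = 3 + 2 (⟪u, v⟫ + ⟪v, w⟫ + ⟪w, u⟫)` and pairing `u + v + w` with each of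
`u`, `v`, `w` gives three linear equations, three unit vectors sum to zero exactly when all
their pairwise inner products are `-1/2 = cos (2π/3)`. Moreover, a vanishing sum
`∑ ‖P₀ - Pᵢ‖⁻¹ • (P₀ - Pᵢ)` writes `P₀` as a combination of the vertices with positive
barycentric coordinates, which characterises the interior of the triangle.
-/

theorem InnerProductGeometry.angle_eq_iff_inner_eq_cos_of_norm_eq_one {V : Type*}
    [NormedAddCommGroup V] [InnerProductSpace ℝ V] {x y : V} (hx : ‖x‖ = 1) (hy : ‖y‖ = 1)
    {θ : ℝ} (hθ₀ : 0 ≤ θ) (hθπ : θ ≤ π) :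
    angle x y = θ ↔ ⟪x, y⟫ = cos θ := by
  rw [← cos_angle_mul_norm_mul_norm, hx, hy, mul_one, mul_one]
  exact ⟨congrArg cos, fun h => injOn_cos ⟨angle_nonneg x y, angle_le_pi x y⟩ ⟨hθ₀, hθπ⟩ h⟩

theorem Real.cos_two_pi_div_three : cos (2 * π / 3) = -(1 / 2) := by
  rw [show 2 * π / 3 = π - π / 3 by ring, cos_pi_sub, cos_pi_div_three]

theorem EuclideanGeometry.angle_eq_angle_normalize_sub {V : Type*} [NormedAddCommGroup V]
    [InnerProductSpace ℝ V] (a p b : V) :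
    ∠ a p b = InnerProductGeometry.angle (NormedSpace.normalize (p - a))
      (NormedSpace.normalize (p - b)) := by
  rw [InnerProductGeometry.angle_normalize_left, InnerProductGeometry.angle_normalize_right,
    ← InnerProductGeometry.angle_neg_neg, neg_sub, neg_sub]
  rfl

theorem add_add_eq_zero_iff_inner_eq_neg_half {V : Type*} [NormedAddCommGroup V]
    [InnerProductSpace ℝ V] {u v w : V} (hu : ‖u‖ = 1) (hv : ‖v‖ = 1) (hw : ‖w‖ = 1) :
    u + v + w = 0 ↔
      ⟪u, v⟫ = -(1 / 2) ∧ ⟪v, w⟫ = -(1 / 2) ∧ ⟪w, u⟫ = -(1 / 2) := by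
  have huu : ⟪u, u⟫ = 1 := by rw [real_inner_self_eq_norm_sq, hu, one_pow]
  have hvv : ⟪v, v⟫ = 1 := by rw [real_inner_self_eq_norm_sq, hv, one_pow]
  have hww : ⟪w, w⟫ = 1 := by rw [real_inner_self_eq_norm_sq, hw, one_pow]
  have hvu := real_inner_comm u v
  have hwv := real_inner_comm v w
  have huw := real_inner_comm w u
  constructor
  · intro h
    have hu' : ⟪u + v + w, u⟫ = 0 := by rw [h, inner_zero_left]
    have hv' : ⟪u + v + w, v⟫ = 0 := by rw [h, inner_zero_left]
    have hw' : ⟪u + v + w, w⟫ = 0 := by rw [h, inner_zero_left]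
    simp only [inner_add_left] at hu' hv' hw'
    refine ⟨?_, ?_, ?_⟩ <;> linarith
  · rintro ⟨huv, hvw, hwu⟩
    rw [← inner_self_eq_zero (𝕜 := ℝ)]
    simp only [inner_add_left, inner_add_right]
    linarith

theorem AffineBasis.mem_interior_convexHull_of_sum_smul_sub_eq_zero {ι E : Type*} [Fintype ι]
    [NormedAddCommGroup E] [NormedSpace ℝ E] (b : AffineBasis ι ℝ E) {p : E} {t : ι → ℝ}
    (ht : ∀ i, 0 < t i) (h : ∑ i, t i • (p - b i) = 0) :
    p ∈ interior (convexHull ℝ (Set.range b)) := by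
  have := b.nonempty
  have hT : 0 < ∑ i, t i := Finset.sum_pos (fun i _ => ht i) Finset.univ_nonempty
  set w : ι → ℝ := fun i => t i / ∑ j, t j
  have hw : ∑ i, w i = 1 := by rw [← Finset.sum_div, div_self hT.ne']
  have hp : Finset.univ.affineCombination ℝ b w = p := by
    rw [Finset.affineCombination_eq_weightedVSubOfPoint_vadd_of_sum_eq_one _ _ _ hw p,
      Finset.weightedVSubOfPoint_apply]
    have hsum : ∑ i, w i • (b i -ᵥ p) = (∑ j, t j)⁻¹ • -∑ i, t i • (p - b i) := by
      simp only [Finset.smul_sum, ← Finset.sum_neg_distrib, smul_smul, vsub_eq_sub, ← smul_neg,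
        neg_sub, w, div_eq_inv_mul]
    rw [hsum, h, neg_zero, smul_zero, zero_vadd]
  rw [b.interior_convexHull, ← hp]
  intro i
  rw [b.coord_apply_combination_of_mem (Finset.mem_univ i) hw]
  exact div_pos (ht i) hT

theorem AffineIndependent.mem_interior_convexHull_of_weighted_sub_eq_zero {V : Type*}
    [NormedAddCommGroup V] [NormedSpace ℝ V] (hV : Module.finrank ℝ V = 2) {P₁ P₂ P₃ p : V}
    (hind : AffineIndependent ℝ ![P₁, P₂, P₃]) {t₁ t₂ t₃ : ℝ} (ht₁ : 0 < t₁) (ht₂ : 0 < t₂)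
    (ht₃ : 0 < t₃) (h : t₁ • (p - P₁) + t₂ • (p - P₂) + t₃ • (p - P₃) = 0) :
    p ∈ interior (convexHull ℝ {P₁, P₂, P₃}) := by
  have := Module.finite_of_finrank_eq_succ hV
  have htop : affineSpan ℝ (Set.range ![P₁, P₂, P₃]) = ⊤ := by
    rw [hind.affineSpan_eq_top_iff_card_eq_finrank_add_one, Fintype.card_fin, hV]
  have hrange : Set.range ![P₁, P₂, P₃] = {P₁, P₂, P₃} := by
    simp only [Matrix.range_cons, Matrix.range_empty, Set.union_empty, Set.singleton_union]
  rw [← hrange]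
  let b : AffineBasis (Fin 3) ℝ V := ⟨_, hind, htop⟩
  refine b.mem_interior_convexHull_of_sum_smul_sub_eq_zero (t := ![t₁, t₂, t₃])
    (fun i => by fin_cases i <;> assumption) ?_
  rw [Fin.sum_univ_three]
  exact h

theorem unit_vectors_sum_zero_iff_interior_and_angles
    (P₁ P₂ P₃ : EuclideanSpace ℝ (Fin 2))
    (hind : AffineIndependent ℝ ![P₁, P₂, P₃])
    (P₀ : EuclideanSpace ℝ (Fin 2))
    (h₁ : P₀ ≠ P₁) (h₂ : P₀ ≠ P₂) (h₃ : P₀ ≠ P₃) :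
    ‖P₀ - P₁‖⁻¹ • (P₀ - P₁) + ‖P₀ - P₂‖⁻¹ • (P₀ - P₂) + ‖P₀ - P₃‖⁻¹ • (P₀ - P₃) = 0 ↔
      P₀ ∈ interior (convexHull ℝ {P₁, P₂, P₃}) ∧
      EuclideanGeometry.angle P₁ P₀ P₂ = 2 * π / 3 ∧
      EuclideanGeometry.angle P₂ P₀ P₃ = 2 * π / 3 ∧
      EuclideanGeometry.angle P₃ P₀ P₁ = 2 * π / 3 := by
  -- `‖x‖⁻¹ • x` is `NormedSpace.normalize x` by definition.
  have hne₁ := sub_ne_zero.2 h₁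
  have hne₂ := sub_ne_zero.2 h₂
  have hne₃ := sub_ne_zero.2 h₃
  have hu₁ := NormedSpace.norm_normalize hne₁
  have hu₂ := NormedSpace.norm_normalize hne₂
  have hu₃ := NormedSpace.norm_normalize hne₃
  have h2π3 : ∀ {x y : EuclideanSpace ℝ (Fin 2)}, ‖x‖ = 1 → ‖y‖ = 1 →
      (InnerProductGeometry.angle x y = 2 * π / 3 ↔ ⟪x, y⟫ = -(1 / 2)) := fun hx hy => by
    rw [InnerProductGeometry.angle_eq_iff_inner_eq_cos_of_norm_eq_one hx hy (by positivity)
      (by linarith [pi_pos]), cos_two_pi_div_three]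
  rw [angle_eq_angle_normalize_sub, angle_eq_angle_normalize_sub, angle_eq_angle_normalize_sub,
    h2π3 hu₁ hu₂, h2π3 hu₂ hu₃, h2π3 hu₃ hu₁, ← add_add_eq_zero_iff_inner_eq_neg_half hu₁ hu₂ hu₃]
  refine ⟨fun h => ⟨?_, h⟩, And.right⟩
  exact hind.mem_interior_convexHull_of_weighted_sub_eq_zero finrank_euclideanSpace_fin
    (inv_pos.2 (norm_pos_iff.2 hne₁)) (inv_pos.2 (norm_pos_iff.2 hne₂))
    (inv_pos.2 (norm_pos_iff.2 hne₃)) h
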